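/- arXiv:1902.08279 — 2 statements merged into one kernel-verified Lean document; each statement's English description precedes it below -/
import Mathlib

section
/- Let c ∈ ℂ, c ≠ 0, let (aᵢ,bᵢ) ∈ ℂ²∖{(0,0)} for i = 1,…,6, and let f(x,z) = c·∏_{i=1}^{6}(bᵢx − aᵢz) be the corresponding binary sextic with invariants 𝔄(f), 𝔅(f), ℭ(f), 𝔇(f). Let M = [[α,β],[γ,δ]] be an invertible 2×2 complex matrix and let f^M(x,z) := f(αx+βz, γx+δz), which factors as f^M(x,z) = c·∏_{i=1}^{6}(bᵢ'x − aᵢ'z) with bᵢ' = αbᵢ − γaᵢ and aᵢ' = δaᵢ − βbᵢ. Then, computing the invariants of f^M from this factorization data, 𝔄(f^M) = (det M)⁶·𝔄(f), 𝔅(f^M) = (det M)¹²·𝔅(f), ℭ(f^M) = (det M)¹⁸·ℭ(f), and 𝔇(f^M) = (det M)³⁰·𝔇(f). Moreover, for any λ ∈ ℂ, λ ≠ 0, replacing c by λc multiplies 𝔄, 𝔅, ℭ, 𝔇 by λ², λ⁴, λ⁶, λ¹⁰ respectively. -/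
/-!
Invariants of a binary sextic `f(x,z) = c·∏ (bᵢ x − aᵢ z)` given by factorization
data, defined via the root differences `D_{ij} = aᵢ bⱼ − aⱼ bᵢ`.

Sums over the 15 partitions of `{1,…,6}` into three unordered pairs
(resp. the 10 partitions into two unordered triples, resp. those partitions
together with the 6 bijections between the two triples) are encoded as
normalized sums over all permutations of `Fin 6`: each partition into pairs
corresponds to exactly `48` permutations, each partition into triples to `72`,
and each (partition, bijection) to `12`.
-/

/-- `D_{ij} = aᵢ bⱼ − aⱼ bᵢ`. -/
noncomputable def Dij (a b : Fin 6 → ℂ) (i j : Fin 6) : ℂ := a i * b j - a j * b i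

/-- `𝔄(f) = c² · Σ_{15 pair partitions} D_{ij}² D_{kl}² D_{mn}²`. -/
noncomputable def bsA (c : ℂ) (a b : Fin 6 → ℂ) : ℂ :=
  c ^ 2 * ((1 / 48 : ℂ) * ∑ σ : Equiv.Perm (Fin 6),
    Dij a b (σ 0) (σ 1) ^ 2 * Dij a b (σ 2) (σ 3) ^ 2 * Dij a b (σ 4) (σ 5) ^ 2)

/-- Product of the squared differences within an ordered triple. -/
noncomputable def tripleD (a b : Fin 6 → ℂ) (i j k : Fin 6) : ℂ :=
  Dij a b i j ^ 2 * Dij a b j k ^ 2 * Dij a b k i ^ 2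

/-- `𝔅(f) = c⁴ · Σ_{10 triple partitions} D_{ij}²D_{jk}²D_{ki}² D_{lm}²D_{mn}²D_{nl}²`. -/
noncomputable def bsB (c : ℂ) (a b : Fin 6 → ℂ) : ℂ :=
  c ^ 4 * ((1 / 72 : ℂ) * ∑ σ : Equiv.Perm (Fin 6),
    tripleD a b (σ 0) (σ 1) (σ 2) * tripleD a b (σ 3) (σ 4) (σ 5))

/-- `ℭ(f) = c⁶ · Σ_{10 triple partitions, 6 bijections}` of the nine squared differences. -/
noncomputable def bsC (c : ℂ) (a b : Fin 6 → ℂ) : ℂ :=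
  c ^ 6 * ((1 / 12 : ℂ) * ∑ σ : Equiv.Perm (Fin 6),
    tripleD a b (σ 0) (σ 1) (σ 2) * tripleD a b (σ 3) (σ 4) (σ 5) *
      (Dij a b (σ 0) (σ 3) ^ 2 * Dij a b (σ 1) (σ 4) ^ 2 * Dij a b (σ 2) (σ 5) ^ 2))

/-- `𝔇(f) = c¹⁰ · ∏_{i<j} D_{ij}²`. -/
noncomputable def bsD (c : ℂ) (a b : Fin 6 → ℂ) : ℂ :=
  c ^ 10 * ∏ i : Fin 6, ∏ j ∈ Finset.Ioi i, Dij a b i j ^ 2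

/-- Transformation behaviour of the invariants `𝔄, 𝔅, ℭ, 𝔇` of a binary sextic
`f(x,z) = c·∏(bᵢx − aᵢz)` under an invertible linear change of variables
`M = [[α,β],[γ,δ]]`, where `f^M` has factorization data `bᵢ' = αbᵢ − γaᵢ`,
`aᵢ' = δaᵢ − βbᵢ`; and under scaling `c ↦ λc`. -/
theorem binary_sextic_invariants_transform
    (c : ℂ) (hc : c ≠ 0) (a b : Fin 6 → ℂ) (hab : ∀ i, ¬(a i = 0 ∧ b i = 0))
    (α β γ δ : ℂ) (hdet : α * δ - β * γ ≠ 0) :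
    (bsA c (fun i => δ * a i - β * b i) (fun i => α * b i - γ * a i)
        = (α * δ - β * γ) ^ 6 * bsA c a b) ∧
    (bsB c (fun i => δ * a i - β * b i) (fun i => α * b i - γ * a i)
        = (α * δ - β * γ) ^ 12 * bsB c a b) ∧
    (bsC c (fun i => δ * a i - β * b i) (fun i => α * b i - γ * a i)
        = (α * δ - β * γ) ^ 18 * bsC c a b) ∧
    (bsD c (fun i => δ * a i - β * b i) (fun i => α * b i - γ * a i)
        = (α * δ - β * γ) ^ 30 * bsD c a b) ∧
    (∀ lam : ℂ, lam ≠ 0 →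
      bsA (lam * c) a b = lam ^ 2 * bsA c a b ∧
      bsB (lam * c) a b = lam ^ 4 * bsB c a b ∧
      bsC (lam * c) a b = lam ^ 6 * bsC c a b ∧
      bsD (lam * c) a b = lam ^ 10 * bsD c a b) := by

  set d := α * δ - β * γ with hd
  have hD : ∀ i j, Dij (fun i => δ * a i - β * b i) (fun i => α * b i - γ * a i) i j
      = d * Dij a b i j := by
    intro i j
    simp only [Dij, hd]
    ring
  refine ⟨?_, ?_, ?_, ?_, ?_⟩
  · unfold bsA
    rw [show ((α * δ - β * γ) ^ 6 : ℂ) = d ^ 6 from rfl]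
    have : ∑ σ : Equiv.Perm (Fin 6),
        Dij (fun i => δ * a i - β * b i) (fun i => α * b i - γ * a i) (σ 0) (σ 1) ^ 2 *
          Dij (fun i => δ * a i - β * b i) (fun i => α * b i - γ * a i) (σ 2) (σ 3) ^ 2 *
          Dij (fun i => δ * a i - β * b i) (fun i => α * b i - γ * a i) (σ 4) (σ 5) ^ 2
        = d ^ 6 * ∑ σ : Equiv.Perm (Fin 6),
            Dij a b (σ 0) (σ 1) ^ 2 * Dij a b (σ 2) (σ 3) ^ 2 * Dij a b (σ 4) (σ 5) ^ 2 := by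
      rw [Finset.mul_sum]
      refine Finset.sum_congr rfl fun σ _ => ?_
      rw [hD, hD, hD]; ring
    rw [this]; ring
  · unfold bsB
    rw [show ((α * δ - β * γ) ^ 12 : ℂ) = d ^ 12 from rfl]
    have : ∑ σ : Equiv.Perm (Fin 6),
        tripleD (fun i => δ * a i - β * b i) (fun i => α * b i - γ * a i) (σ 0) (σ 1) (σ 2) *
          tripleD (fun i => δ * a i - β * b i) (fun i => α * b i - γ * a i) (σ 3) (σ 4) (σ 5)
        = d ^ 12 * ∑ σ : Equiv.Perm (Fin 6),
            tripleD a b (σ 0) (σ 1) (σ 2) * tripleD a b (σ 3) (σ 4) (σ 5) := by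
      rw [Finset.mul_sum]
      refine Finset.sum_congr rfl fun σ _ => ?_
      simp only [tripleD, hD]; ring
    rw [this]; ring
  · unfold bsC
    rw [show ((α * δ - β * γ) ^ 18 : ℂ) = d ^ 18 from rfl]
    have : ∑ σ : Equiv.Perm (Fin 6),
        tripleD (fun i => δ * a i - β * b i) (fun i => α * b i - γ * a i) (σ 0) (σ 1) (σ 2) *
          tripleD (fun i => δ * a i - β * b i) (fun i => α * b i - γ * a i) (σ 3) (σ 4) (σ 5) *
          (Dij (fun i => δ * a i - β * b i) (fun i => α * b i - γ * a i) (σ 0) (σ 3) ^ 2 *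
            Dij (fun i => δ * a i - β * b i) (fun i => α * b i - γ * a i) (σ 1) (σ 4) ^ 2 *
            Dij (fun i => δ * a i - β * b i) (fun i => α * b i - γ * a i) (σ 2) (σ 5) ^ 2)
        = d ^ 18 * ∑ σ : Equiv.Perm (Fin 6),
            tripleD a b (σ 0) (σ 1) (σ 2) * tripleD a b (σ 3) (σ 4) (σ 5) *
              (Dij a b (σ 0) (σ 3) ^ 2 * Dij a b (σ 1) (σ 4) ^ 2 * Dij a b (σ 2) (σ 5) ^ 2) := by
      rw [Finset.mul_sum]
      refine Finset.sum_congr rfl fun σ _ => ?_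
      simp only [tripleD, hD]; ring
    rw [this]; ring
  · unfold bsD
    rw [show ((α * δ - β * γ) ^ 30 : ℂ) = d ^ 30 from rfl]
    have : ∏ i : Fin 6, ∏ j ∈ Finset.Ioi i,
        Dij (fun i => δ * a i - β * b i) (fun i => α * b i - γ * a i) i j ^ 2
        = d ^ 30 * ∏ i : Fin 6, ∏ j ∈ Finset.Ioi i, Dij a b i j ^ 2 := by
      have hpow : ∏ i : Fin 6, ∏ _j ∈ Finset.Ioi i, (d ^ 2 : ℂ) = d ^ 30 := by
        rw [Finset.prod_congr rfl fun i _ => Finset.prod_const (d ^ 2), Fin.prod_univ_six]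
        norm_num [Fin.card_Ioi, show ((3:Fin 6):ℕ) = 3 from rfl,
          show ((4:Fin 6):ℕ) = 4 from rfl, show ((5:Fin 6):ℕ) = 5 from rfl]
        ring
      simp only [hD, mul_pow, Finset.prod_mul_distrib]
      rw [hpow]
    rw [this]; ring
  · intro lam _
    refine ⟨?_, ?_, ?_, ?_⟩ <;> simp only [bsA, bsB, bsC, bsD] <;> ring
end

section
/- Let f(x,z) = c·∏_{i=1}^{6}(bᵢx − aᵢz) be a binary sextic given by factorization data, define J₂ = 𝔄(f)/8, J₄ = (4J₂² − 𝔅(f))/96, J₆ = (8J₂³ − 160J₂J₄ − ℭ(f))/576, J₁₀ = 𝔇(f)/2¹², and, when J₂ ≠ 0, the absolute invariants i₁ = 144·J₄/J₂², i₂ = −1728·(J₂J₄ − 3J₆)/J₂³, i₃ = 486·J₁₀/J₂⁵. Let λ ∈ ℂ∖{0} and let M = [[α,β],[γ,δ]] be an invertible complex 2×2 matrix, and let g(x,z) := λ·f(αx+βz, γx+δz), with its invariants computed from the factorization g(x,z) = (λc)·∏_{i=1}^{6}((αbᵢ−γaᵢ)x − (δaᵢ−βbᵢ)z). If J₂(f)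 ≠ 0, then J₂(g) ≠ 0 and i₁(g) = i₁(f), i₂(g) = i₂(f), i₃(g) = i₃(f). -/
/-- `J₂ = 𝔄/8`. -/
noncomputable def J2 (c : ℂ) (a b : Fin 6 → ℂ) : ℂ := bsA c a b / 8

/-- `J₄ = (4J₂² − 𝔅)/96`. -/
noncomputable def J4 (c : ℂ) (a b : Fin 6 → ℂ) : ℂ :=
  (4 * J2 c a b ^ 2 - bsB c a b) / 96

/-- `J₆ = (8J₂³ − 160J₂J₄ − ℭ)/576`. -/
noncomputable def J6 (c : ℂ) (a b : Fin 6 → ℂ) : ℂ :=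
  (8 * J2 c a b ^ 3 - 160 * J2 c a b * J4 c a b - bsC c a b) / 576

/-- `J₁₀ = 𝔇/2¹²`. -/
noncomputable def J10 (c : ℂ) (a b : Fin 6 → ℂ) : ℂ := bsD c a b / 2 ^ 12

/-- `i₁ = 144·J₄/J₂²`. -/
noncomputable def absi1 (c : ℂ) (a b : Fin 6 → ℂ) : ℂ :=
  144 * J4 c a b / J2 c a b ^ 2

/-- `i₂ = −1728·(J₂J₄ − 3J₆)/J₂³`. -/
noncomputable def absi2 (c : ℂ) (a b : Fin 6 → ℂ) : ℂ :=
  -1728 * (J2 c a b * J4 c a b - 3 * J6 c a b) / J2 c a b ^ 3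

/-- `i₃ = 486·J₁₀/J₂⁵`. -/
noncomputable def absi3 (c : ℂ) (a b : Fin 6 → ℂ) : ℂ :=
  486 * J10 c a b / J2 c a b ^ 5

lemma Dij_transform (a b : Fin 6 → ℂ) (α β γ δ : ℂ) (i j : Fin 6) :
    Dij (fun i => δ * a i - β * b i) (fun i => α * b i - γ * a i) i j
      = (α * δ - β * γ) * Dij a b i j := by
  simp only [Dij]; ring

lemma bsA_transform (c : ℂ) (a b : Fin 6 → ℂ) (lam α β γ δ : ℂ) :
    bsA (lam * c) (fun i => δ * a i - β * b i) (fun i => α * b i - γ * a i)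
      = lam ^ 2 * (α * δ - β * γ) ^ 6 * bsA c a b := by
  unfold bsA
  rw [Finset.mul_sum, Finset.mul_sum, Finset.mul_sum, Finset.mul_sum]
  rw [Finset.mul_sum]
  refine Finset.sum_congr rfl fun σ _ => ?_
  simp only [Dij_transform]
  ring

lemma bsB_transform (c : ℂ) (a b : Fin 6 → ℂ) (lam α β γ δ : ℂ) :
    bsB (lam * c) (fun i => δ * a i - β * b i) (fun i => α * b i - γ * a i)
      = lam ^ 4 * (α * δ - β * γ) ^ 12 * bsB c a b := by
  unfold bsB tripleD
  rw [Finset.mul_sum, Finset.mul_sum, Finset.mul_sum, Finset.mul_sum]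
  rw [Finset.mul_sum]
  refine Finset.sum_congr rfl fun σ _ => ?_
  simp only [Dij_transform]
  ring

lemma bsC_transform (c : ℂ) (a b : Fin 6 → ℂ) (lam α β γ δ : ℂ) :
    bsC (lam * c) (fun i => δ * a i - β * b i) (fun i => α * b i - γ * a i)
      = lam ^ 6 * (α * δ - β * γ) ^ 18 * bsC c a b := by
  unfold bsC tripleD
  rw [Finset.mul_sum, Finset.mul_sum, Finset.mul_sum, Finset.mul_sum]
  rw [Finset.mul_sum]
  refine Finset.sum_congr rfl fun σ _ => ?_
  simp only [Dij_transform]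
  ring

lemma bsD_transform (c : ℂ) (a b : Fin 6 → ℂ) (lam α β γ δ : ℂ) :
    bsD (lam * c) (fun i => δ * a i - β * b i) (fun i => α * b i - γ * a i)
      = lam ^ 10 * (α * δ - β * γ) ^ 30 * bsD c a b := by
  unfold bsD
  simp only [Dij_transform, mul_pow]
  simp only [Finset.prod_mul_distrib]
  have hK : ∏ i : Fin 6, ∏ j ∈ Finset.Ioi i, ((α * δ - β * γ) ^ 2 : ℂ)
      = (α * δ - β * γ) ^ 30 := by
    simp only [Finset.prod_const, ← pow_mul, Finset.prod_pow_eq_pow_sum]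
    congr 1
  rw [hK]; ring

/-- The absolute invariants `i₁, i₂, i₃` are invariant under any invertible linear
change of variables `M = [[α,β],[γ,δ]]` together with scaling `f ↦ λ·f^M`
(where `g = λ·f^M` has factorization data `λc`, `bᵢ' = αbᵢ − γaᵢ`,
`aᵢ' = δaᵢ − βbᵢ`), provided `J₂(f) ≠ 0`; moreover `J₂(g) ≠ 0`. -/
theorem absolute_invariants_are_GL2_invariant
    (c : ℂ) (hc : c ≠ 0) (a b : Fin 6 → ℂ) (hab : ∀ i, ¬(a i = 0 ∧ b i = 0))
    (lam : ℂ) (hlam : lam ≠ 0)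
    (α β γ δ : ℂ) (hdet : α * δ - β * γ ≠ 0)
    (hJ2 : J2 c a b ≠ 0) :
    J2 (lam * c) (fun i => δ * a i - β * b i) (fun i => α * b i - γ * a i) ≠ 0 ∧
    absi1 (lam * c) (fun i => δ * a i - β * b i) (fun i => α * b i - γ * a i)
      = absi1 c a b ∧
    absi2 (lam * c) (fun i => δ * a i - β * b i) (fun i => α * b i - γ * a i)
      = absi2 c a b ∧
    absi3 (lam * c) (fun i => δ * a i - β * b i) (fun i => α * b i - γ * a i)
      = absi3 c a b := by
  set t : ℂ := lam ^ 2 * (α * δ - β * γ) ^ 6 with ht_def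
  have ht : t ≠ 0 := mul_ne_zero (pow_ne_zero _ hlam) (pow_ne_zero _ hdet)
  have h2 : J2 (lam * c) (fun i => δ * a i - β * b i) (fun i => α * b i - γ * a i)
      = t * J2 c a b := by
    unfold J2; rw [bsA_transform]; ring
  have h4 : J4 (lam * c) (fun i => δ * a i - β * b i) (fun i => α * b i - γ * a i)
      = t ^ 2 * J4 c a b := by
    unfold J4; rw [bsB_transform, h2]; unfold J2; ring
  have h6 : J6 (lam * c) (fun i => δ * a i - β * b i) (fun i => α * b i - γ * a i)
      = t ^ 3 * J6 c a b := by
    unfold J6; rw [bsC_transform, h2, h4]; unfold J2 J4; ring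
  have h10 : J10 (lam * c) (fun i => δ * a i - β * b i) (fun i => α * b i - γ * a i)
      = t ^ 5 * J10 c a b := by
    unfold J10; rw [bsD_transform]; ring
  refine ⟨h2 ▸ mul_ne_zero ht hJ2, ?_, ?_, ?_⟩
  · unfold absi1; rw [h4, h2]; field_simp
  · unfold absi2; rw [h6, h4, h2]; field_simp
  · unfold absi3; rw [h10, h2]; field_simp
end
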